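/- The tree Sobolev transport distance S_p (p ≥ 1) is a metric on probability measures on the vertices of a finite rooted tree: it is nonnegative, symmetric, satisfies the triangle inequality, and S_p(μ,ν) = 0 if and only if μ = ν. -/
import Mathlib


open scoped BigOperators Classical
open Filter

noncomputable section

variable {V : Type*}

/-- The unique path between two vertices of a tree, as a walk. -/
def treePath (G : SimpleGraph V) (hG : G.IsTree) (x y : V) : G.Walk x y :=
  (hG.existsUnique_path x y).exists.choose

/-- Dirac probability measure at `x`, as a function. -/
def dirac [DecidableEq V] (x : V) : V → ℝ := fun v => if v = x then 1 else 0

/-- A probability measure on a finite vertex set, as a function. -/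
def IsProb [Fintype V] (mu : V → ℝ) : Prop := (∀ v, 0 ≤ mu v) ∧ ∑ v, mu v = 1

/-- Cut mass `μ(γ_e)`: total μ-mass of vertices `v` such that the edge `e` lies on the
unique path from the root `z0` to `v`. -/
def cutMass [Fintype V] (G : SimpleGraph V) (hG : G.IsTree) (z0 : V)
    (mu : V → ℝ) (e : Sym2 V) : ℝ :=
  ∑ v : V, if e ∈ (treePath G hG z0 v).edges then mu v else 0

/-- Order-1 Sobolev transport distance on a rooted tree. -/
def S1 [Fintype V] (G : SimpleGraph V) (hG : G.IsTree) (z0 : V) (lam : Sym2 V → ℝ)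
    (mu nu : V → ℝ) : ℝ :=
  ∑ e ∈ G.edgeFinset, lam e * |cutMass G hG z0 mu e - cutMass G hG z0 nu e|

/-- Order-p Sobolev transport distance on a rooted tree. -/
def Sp [Fintype V] (G : SimpleGraph V) (hG : G.IsTree) (z0 : V) (lam : Sym2 V → ℝ)
    (p : ℝ) (mu nu : V → ℝ) : ℝ :=
  (∑ e ∈ G.edgeFinset, lam e * |cutMass G hG z0 mu e - cutMass G hG z0 nu e| ^ p) ^ (1/p)

/-- Tree path metric induced by edge lengths. -/
def treeDist (G : SimpleGraph V) (hG : G.IsTree) (lam : Sym2 V → ℝ) (x y : V) : ℝ :=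
  ((treePath G hG x y).edges.map lam).sum

/-- 1-Wasserstein distance via Kantorovich–Rubinstein duality. -/
def W1 [Fintype V] (d : V → V → ℝ) (mu nu : V → ℝ) : ℝ :=
  sSup {s | ∃ f : V → ℝ, (∀ a b, |f a - f b| ≤ d a b) ∧ s = ∑ v, f v * (mu v - nu v)}

lemma treePath_isPath (G : SimpleGraph V) (hG : G.IsTree) (x y : V) :
    (treePath G hG x y).IsPath :=
  (hG.existsUnique_path x y).exists.choose_spec

lemma treePath_unique (G : SimpleGraph V) (hG : G.IsTree) {x y : V}
    (q : G.Walk x y) (hq : q.IsPath) : q = treePath G hG x y :=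
  (hG.existsUnique_path x y).unique hq (treePath_isPath G hG x y)

lemma cutMass_sub [Fintype V] (G : SimpleGraph V) (hG : G.IsTree) (z0 : V)
    (mu nu : V → ℝ) (e : Sym2 V) :
    cutMass G hG z0 (fun v => mu v - nu v) e
      = cutMass G hG z0 mu e - cutMass G hG z0 nu e := by
  unfold cutMass
  rw [← Finset.sum_sub_distrib]
  exact Finset.sum_congr rfl fun v _ => by split_ifs <;> ring

lemma cut_zero_forces_zero [Fintype V]
    (G : SimpleGraph V) (hG : G.IsTree) (z0 : V) (h : V → ℝ)
    (h0 : ∑ v, h v = 0)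
    (hcut : ∀ e ∈ G.edgeSet, cutMass G hG z0 h e = 0) :
    ∀ v, h v = 0 := by
  classical
  set d : V → ℕ := fun v => (treePath G hG z0 v).length with hd
  set N : ℕ := Finset.univ.sup d with hN
  have hdN : ∀ v, d v ≤ N := fun v => Finset.le_sup (Finset.mem_univ v)
  have hdz0 : d z0 = 0 := by
    have : (SimpleGraph.Walk.nil : G.Walk z0 z0) = treePath G hG z0 z0 :=
      treePath_unique G hG _ SimpleGraph.Walk.IsPath.nil
    simp [hd, ← this]
  -- decomposition of the path to a non-root vertex
  have decomp : ∀ v : V, v ≠ z0 → ∃ (u : V) (q : G.Walk z0 u) (hadj : G.Adj u v),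
      q.concat hadj = treePath G hG z0 v := by
    intro v hv
    cases hp : treePath G hG z0 v with
    | nil => exact absurd rfl hv
    | cons hadj q =>
      obtain ⟨x, r, h', hc⟩ := SimpleGraph.Walk.exists_cons_eq_concat hadj q
      exact ⟨x, r, h', by rw [← hc]⟩
  -- key comparison lemma
  have key : ∀ (v u : V) (hadj : G.Adj u v) (q : G.Walk z0 u),
      q.concat hadj = treePath G hG z0 v →
      ∀ w : V, s(u, v) ∈ (treePath G hG z0 w).edges → w = v ∨ d v < d w := by
    intro v u hadj q hq w hew
    have hv : v ∈ (treePath G hG z0 w).support :=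
      SimpleGraph.Walk.snd_mem_support_of_mem_edges _ hew
    set r := treePath G hG z0 w with hr
    have hrp : r.IsPath := treePath_isPath G hG z0 w
    have htake : (r.takeUntil v hv).IsPath := hrp.takeUntil hv
    have heq : r.takeUntil v hv = treePath G hG z0 v := treePath_unique G hG _ htake
    have hlen : r.length = d v + (r.dropUntil v hv).length := by
      conv_lhs => rw [← r.take_spec hv]
      rw [SimpleGraph.Walk.length_append, heq]
    rcases Nat.eq_zero_or_pos (r.dropUntil v hv).length with h0' | h0'
    · left
      have : (r.dropUntil v hv).Nil := SimpleGraph.Walk.nil_iff_length_eq.mpr h0'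
      exact this.eq.symm
    · right
      have : d w = r.length := rfl
      omega
  -- strong downward induction on distance from the root
  have main : ∀ n : ℕ, ∀ v : V, v ≠ z0 → N - d v = n → h v = 0 := by
    intro n
    induction n using Nat.strong_induction_on with
    | _ n ih =>
      intro v hv hn
      obtain ⟨u, q, hadj, hq⟩ := decomp v hv
      have hev : s(u, v) ∈ (treePath G hG z0 v).edges := by
        rw [← hq, SimpleGraph.Walk.edges_concat]
        simp
      have hsum : (∑ w, if s(u, v) ∈ (treePath G hG z0 w).edges then h w else 0) = 0 := by
        have := hcut s(u, v) hadj
        unfold cutMass at this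
        exact this
      have hterm : ∀ w ∈ Finset.univ, w ≠ v →
          (if s(u, v) ∈ (treePath G hG z0 w).edges then h w else 0) = 0 := by
        intro w _ hwv
        split_ifs with hew
        · rcases key v u hadj q hq w hew with rfl | hlt
          · exact absurd rfl hwv
          · have hwz : w ≠ z0 := by
              intro hz; rw [hz] at hlt; omega
            have hwN := hdN w
            exact ih (N - d w) (by omega) w hwz rfl
        · rfl
      have hsingle := Finset.sum_eq_single_of_mem v (Finset.mem_univ v) hterm
      rw [hsum, if_pos hev] at hsingle
      exact hsingle.symm
  intro v
  by_cases hv : v = z0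
  · subst hv
    have := Finset.sum_eq_single_of_mem v (Finset.mem_univ v)
      (fun w _ hw => main (N - d w) w hw rfl)
    rw [h0] at this
    exact this.symm
  · exact main (N - d v) v hv rfl

/-- The tree Sobolev transport distance `S_p` (`p ≥ 1`) is a metric on probability
measures on the vertices of a finite rooted tree. -/
theorem Sp_is_metric [Fintype V] [DecidableEq V]
    (G : SimpleGraph V) (hG : G.IsTree) (z0 : V) (lam : Sym2 V → ℝ)
    (hlam : ∀ e ∈ G.edgeSet, 0 < lam e) (p : ℝ) (hp : 1 ≤ p) :
    (∀ mu nu : V → ℝ, IsProb mu → IsProb nu → 0 ≤ Sp G hG z0 lam p mu nu) ∧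
    (∀ mu nu : V → ℝ, IsProb mu → IsProb nu →
      Sp G hG z0 lam p mu nu = Sp G hG z0 lam p nu mu) ∧
    (∀ mu nu rho : V → ℝ, IsProb mu → IsProb nu → IsProb rho →
      Sp G hG z0 lam p mu rho ≤ Sp G hG z0 lam p mu nu + Sp G hG z0 lam p nu rho) ∧
    (∀ mu nu : V → ℝ, IsProb mu → IsProb nu →
      (Sp G hG z0 lam p mu nu = 0 ↔ mu = nu)) := by
  have hp0 : (0:ℝ) < p := lt_of_lt_of_le one_pos hp
  have hlam' : ∀ e ∈ G.edgeFinset, (0:ℝ) ≤ lam e :=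
    fun e he => (hlam e (SimpleGraph.mem_edgeFinset.mp he)).le
  have hsum_nonneg : ∀ mu nu : V → ℝ,
      0 ≤ ∑ e ∈ G.edgeFinset, lam e * |cutMass G hG z0 mu e - cutMass G hG z0 nu e| ^ p := by
    intro mu nu
    refine Finset.sum_nonneg fun e he => mul_nonneg (hlam' e he) ?_
    exact Real.rpow_nonneg (abs_nonneg _) _
  refine ⟨?_, ?_, ?_, ?_⟩
  · intro mu nu _ _
    exact Real.rpow_nonneg (hsum_nonneg mu nu) _
  · intro mu nu _ _
    unfold Sp
    congr 1
    exact Finset.sum_congr rfl fun e _ => by rw [abs_sub_comm]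
  · intro mu nu rho _ _ _
    have key : ∀ (a b : V → ℝ), ∀ e ∈ G.edgeFinset,
        lam e * |cutMass G hG z0 a e - cutMass G hG z0 b e| ^ p
          = |lam e ^ (1/p) * (cutMass G hG z0 a e - cutMass G hG z0 b e)| ^ p := by
      intro a b e he
      have hl : (0:ℝ) ≤ lam e := hlam' e he
      rw [abs_mul, abs_of_nonneg (Real.rpow_nonneg hl _),
        Real.mul_rpow (Real.rpow_nonneg hl _) (abs_nonneg _),
        ← Real.rpow_mul hl, one_div_mul_cancel hp0.ne', Real.rpow_one]
    have h1 : ∀ a b : V → ℝ, Sp G hG z0 lam p a b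
        = (∑ e ∈ G.edgeFinset,
            |lam e ^ (1/p) * (cutMass G hG z0 a e - cutMass G hG z0 b e)| ^ p) ^ (1/p) := by
      intro a b
      unfold Sp
      congr 1
      exact Finset.sum_congr rfl (key a b)
    rw [h1 mu rho, h1 mu nu, h1 nu rho]
    have hmink := Real.Lp_add_le G.edgeFinset
      (fun e => lam e ^ (1/p) * (cutMass G hG z0 mu e - cutMass G hG z0 nu e))
      (fun e => lam e ^ (1/p) * (cutMass G hG z0 nu e - cutMass G hG z0 rho e)) hp
    refine le_trans (le_of_eq ?_) hmink
    congr 1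
    refine Finset.sum_congr rfl fun e _ => ?_
    congr 1
    rw [abs_eq_abs]
    left
    ring
  · intro mu nu hmu hnu
    constructor
    · intro hzero
      unfold Sp at hzero
      have hsum0 : ∑ e ∈ G.edgeFinset,
          lam e * |cutMass G hG z0 mu e - cutMass G hG z0 nu e| ^ p = 0 := by
        have := (Real.rpow_eq_zero (hsum_nonneg mu nu) (by positivity : (1:ℝ)/p ≠ 0)).mp hzero
        exact this
      have hterm : ∀ e ∈ G.edgeFinset,
          lam e * |cutMass G hG z0 mu e - cutMass G hG z0 nu e| ^ p = 0 :=
        (Finset.sum_eq_zero_iff_of_nonneg fun e he =>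
          mul_nonneg (hlam' e he) (Real.rpow_nonneg (abs_nonneg _) _)).mp hsum0
      have hcutEq : ∀ e ∈ G.edgeSet, cutMass G hG z0 mu e = cutMass G hG z0 nu e := by
        intro e he
        have he' : e ∈ G.edgeFinset := SimpleGraph.mem_edgeFinset.mpr he
        have h1 := hterm e he'
        have hl : (0:ℝ) < lam e := hlam e he
        have h2 : |cutMass G hG z0 mu e - cutMass G hG z0 nu e| ^ p = 0 := by
          rcases mul_eq_zero.mp h1 with h | h
          · exact absurd h hl.ne'
          · exact h
        have h3 := (Real.rpow_eq_zero (abs_nonneg _) hp0.ne').mp h2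
        have := abs_eq_zero.mp h3
        linarith
      have hzeros := cut_zero_forces_zero G hG z0 (fun v => mu v - nu v)
        (by rw [Finset.sum_sub_distrib, hmu.2, hnu.2]; ring)
        (by
          intro e he
          rw [cutMass_sub, hcutEq e he, sub_self])
      funext v
      have h2 : mu v - nu v = 0 := hzeros v
      linarith
    · intro heq
      subst heq
      unfold Sp
      have : ∑ e ∈ G.edgeFinset,
          lam e * |cutMass G hG z0 mu e - cutMass G hG z0 mu e| ^ p = 0 := by
        refine Finset.sum_eq_zero fun e _ => ?_
        rw [sub_self, abs_zero, Real.zero_rpow hp0.ne', mul_zero]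
      rw [this, Real.zero_rpow (by positivity : (1:ℝ)/p ≠ 0)]

end
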